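/- arXiv:1903.04416 — 6 statements merged into one kernel-verified Lean document; each statement's English description precedes it below -/
import Mathlib

section
/- Let A be a symmetric positive definite n×n real matrix and ρ > 0 satisfy nρ > λ_max(A). Then Z° = (1/n) J_n, where J_n is the all-ones matrix, is the unique maximizer of ⟨A, Z⟩ − nρ·tr(Z) over the set 𝒞 = {Z ∈ ℝ^{n×n} : Z = Zᵀ, Z ⪰ 0, Z·1 = 1, Z ≥ 0 entrywise}. -/
/-!
For feasible `Z`, symmetry and `Z·1 = 1` say that `Z` fixes the orthogonal projection
`Z° = (1/n)·J` onto the span of `1`, so `Z - Z° = (I - Z°) Z (I - Z°)` is positive semidefinite.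
Diagonalising `A` writes `⟨A, W⟩` as `∑ λᵢ(A) wᵢ`, where the `wᵢ` are the diagonal entries of `W`
in an eigenbasis of `A`; for `W = Z - Z° ≠ 0` they are nonnegative with positive sum `tr W`, so
`⟨A, W⟩ < nρ·tr W`, and this is exactly the gap between the two objective values.
-/

open Matrix BigOperators

/-- The feasible set 𝒞 = {Z : Z = Zᵀ, Z ⪰ 0, Z·1 = 1, Z ≥ 0 entrywise}. -/
def sdpFeasible {n : ℕ} (Z : Matrix (Fin n) (Fin n) ℝ) : Prop :=
  Z.IsSymm ∧ Z.PosSemidef ∧ (∀ i, ∑ j, Z i j = 1) ∧ (∀ i j, 0 ≤ Z i j)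

/-- The objective ⟨A, Z⟩ − nρ·tr(Z), where ⟨A, Z⟩ = tr(AᵀZ). -/
noncomputable def sdpObj {n : ℕ} (A Z : Matrix (Fin n) (Fin n) ℝ) (ρ : ℝ) : ℝ :=
  (Aᵀ * Z).trace - (n : ℝ) * ρ * Z.trace

/-- The all-(1/n) matrix Z° = (1/n)·J_n. -/
noncomputable def allOnesOverN (n : ℕ) : Matrix (Fin n) (Fin n) ℝ :=
  Matrix.of fun _ _ => 1 / (n : ℝ)

namespace Matrix

variable {ι : Type*} [Fintype ι] [DecidableEq ι]

lemma PosSemidef.sub_of_isIdempotentElem {R : Type*} [Ring R] [PartialOrder R] [StarRing R]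
    {Z P : Matrix ι ι R} (hZ : Z.PosSemidef) (hP : P.IsHermitian) (hPP : IsIdempotentElem P)
    (hZP : Z * P = P) : (Z - P).PosSemidef := by
  have hPZ : P * Z = P := by
    simpa only [conjTranspose_mul, hZ.isHermitian.eq, hP.eq] using congrArg (·ᴴ) hZP
  have hconj : (1 - P)ᴴ * Z * (1 - P) = Z - P := by
    rw [conjTranspose_sub, conjTranspose_one, hP.eq]
    simp only [sub_mul, mul_sub, one_mul, mul_one, hZP, hPZ, hPP.eq]
    abel
  exact hconj ▸ hZ.conjTranspose_mul_mul_same (1 - P)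

lemma IsHermitian.trace_mul_eq_sum_eigenvalues_mul {A : Matrix ι ι ℝ} (hA : A.IsHermitian)
    (W : Matrix ι ι ℝ) :
    (A * W).trace = ∑ i, hA.eigenvalues i *
      (star (hA.eigenvectorUnitary : Matrix ι ι ℝ) * W * hA.eigenvectorUnitary) i i := by
  set U : Matrix ι ι ℝ := ↑hA.eigenvectorUnitary
  calc (A * W).trace = (U * (diagonal hA.eigenvalues * (star U * W))).trace := by
        conv_lhs => rw [hA.spectral_theorem, Unitary.conjStarAlgAut_apply]
        simp [U, mul_assoc]
    _ = (diagonal hA.eigenvalues * (star U * W * U)).trace := by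
        rw [trace_mul_comm]
        simp only [mul_assoc]
    _ = _ := by simp [trace, diagonal_mul]

lemma IsHermitian.trace_mul_lt_of_eigenvalues_lt {A W : Matrix ι ι ℝ} (hA : A.IsHermitian)
    {c : ℝ} (hc : ∀ i, hA.eigenvalues i < c) (hW : W.PosSemidef) (hW0 : W ≠ 0) :
    (A * W).trace < c * W.trace := by
  set U : Matrix ι ι ℝ := ↑hA.eigenvectorUnitary
  set M := star U * W * U
  have hM : M.PosSemidef := hW.conjTranspose_mul_mul_same U
  have htrace : M.trace = W.trace := by
    rw [trace_mul_cycle, Unitary.mul_star_self_of_mem hA.eigenvectorUnitary.2, one_mul]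
  have htrace_ne : M.trace ≠ 0 := htrace ▸ hW.trace_eq_zero_iff.not.mpr hW0
  obtain ⟨i, -, hi⟩ := Finset.exists_ne_zero_of_sum_ne_zero htrace_ne
  rw [hA.trace_mul_eq_sum_eigenvalues_mul, ← htrace, trace, Finset.mul_sum]
  exact Finset.sum_lt_sum (fun j _ => mul_le_mul_of_nonneg_right (hc j).le hM.diag_nonneg)
    ⟨i, Finset.mem_univ i, mul_lt_mul_of_pos_right (hc i) (hM.diag_nonneg.lt_of_ne' hi)⟩

end Matrix

lemma isHermitian_allOnesOverN (n : ℕ) : (allOnesOverN n).IsHermitian := by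
  ext i j
  simp [allOnesOverN]

lemma isIdempotentElem_allOnesOverN (n : ℕ) : IsIdempotentElem (allOnesOverN n) := by
  ext i j
  have hn : (n : ℝ) ≠ 0 := Nat.cast_ne_zero.mpr i.pos.ne'
  simp [allOnesOverN, mul_apply, hn]

lemma mul_allOnesOverN_of_sum_eq_one {n : ℕ} {Z : Matrix (Fin n) (Fin n) ℝ}
    (hZ : ∀ i, ∑ j, Z i j = 1) : Z * allOnesOverN n = allOnesOverN n := by
  ext i j
  simp [allOnesOverN, mul_apply, ← Finset.sum_mul, hZ]

lemma sdpFeasible_allOnesOverN (n : ℕ) : sdpFeasible (allOnesOverN n) := by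
  refine ⟨isHermitian_iff_isSymm.mp (isHermitian_allOnesOverN n), ?_, fun i => ?_,
    fun i j => by simp [allOnesOverN]⟩
  · rw [← isIdempotentElem_allOnesOverN n, ← (isHermitian_allOnesOverN n).eq]
    exact posSemidef_conjTranspose_mul_self _
  · have hn : (n : ℝ) ≠ 0 := Nat.cast_ne_zero.mpr i.pos.ne'
    simp [allOnesOverN, hn]

lemma sdpFeasible.posSemidef_sub_allOnesOverN {n : ℕ} {Z : Matrix (Fin n) (Fin n) ℝ}
    (hZ : sdpFeasible Z) : (Z - allOnesOverN n).PosSemidef :=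
  hZ.2.1.sub_of_isIdempotentElem (isHermitian_allOnesOverN n) (isIdempotentElem_allOnesOverN n)
    (mul_allOnesOverN_of_sum_eq_one hZ.2.2.1)

lemma sdpObj_sub_sdpObj {n : ℕ} {A : Matrix (Fin n) (Fin n) ℝ} (hA : A.IsSymm)
    (Z Z' : Matrix (Fin n) (Fin n) ℝ) (ρ : ℝ) :
    sdpObj A Z ρ - sdpObj A Z' ρ = (A * (Z - Z')).trace - n * ρ * (Z - Z').trace := by
  simp only [sdpObj, hA.eq, mul_sub, trace_sub]
  ring

theorem sdp_unique_max_allones_general {n : ℕ}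
    (A : Matrix (Fin n) (Fin n) ℝ) (hA : A.PosDef) (ρ : ℝ)
    (hgap : ∀ i, hA.1.eigenvalues i < (n : ℝ) * ρ) :
    sdpFeasible (allOnesOverN n) ∧
    ∀ Z : Matrix (Fin n) (Fin n) ℝ, sdpFeasible Z → Z ≠ allOnesOverN n →
      sdpObj A Z ρ < sdpObj A (allOnesOverN n) ρ := by
  refine ⟨sdpFeasible_allOnesOverN n, fun Z hZ hne => ?_⟩
  have hgain := hA.1.trace_mul_lt_of_eigenvalues_lt hgap hZ.posSemidef_sub_allOnesOverN
    (sub_ne_zero.mpr hne)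
  have hdiff := sdpObj_sub_sdpObj (isHermitian_iff_isSymm.mp hA.1) Z (allOnesOverN n) ρ
  linarith

/-- If A is symmetric positive definite and nρ > λ_max(A), then Z° = (1/n)·J_n is the
unique maximizer of ⟨A,Z⟩ − nρ·tr(Z) over 𝒞. -/
theorem sdp_unique_max_allones {n : ℕ} (hn : 0 < n)
    (A : Matrix (Fin n) (Fin n) ℝ) (hA : A.PosDef) (ρ : ℝ) (hρ : 0 < ρ)
    (hgap : ∀ i, hA.1.eigenvalues i < (n : ℝ) * ρ) :
    sdpFeasible (allOnesOverN n) ∧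
    ∀ Z : Matrix (Fin n) (Fin n) ℝ, sdpFeasible Z → Z ≠ allOnesOverN n →
      sdpObj A Z ρ < sdpObj A (allOnesOverN n) ρ :=
  sdp_unique_max_allones_general A hA ρ hgap
end

section
/- Let A be a symmetric positive definite n×n real matrix and ρ > 0 satisfy nρ < λ_min(A). Then the identity matrix I_n is the unique maximizer of ⟨A, Z⟩ − nρ·tr(Z) over the set 𝒞 = {Z ∈ ℝ^{n×n} : Z = Zᵀ, Z ⪰ 0, Z·1 = 1, Z ≥ 0 entrywise}. -/
/-!
Since the objective is affine in `Z`, the gap at a feasible `Z` is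
`sdpObj A 1 ρ - sdpObj A Z ρ = tr((A - nρ I)(I - Z))`. The first factor is positive definite
because `nρ < λ_min(A)`. The second is positive semidefinite, because for a symmetric
row-stochastic `Z` the quadratic form of `I - Z` is `½ ∑ᵢⱼ Zᵢⱼ (xᵢ - xⱼ)²`, and it is nonzero
when `Z ≠ I`. The trace of a positive definite matrix times a nonzero positive semidefinite one
is positive.
-/

open Matrix BigOperators

open Finset Unitary
open scoped ComplexOrder

namespace Matrix

section RCLike

variable {n 𝕜 : Type*} [Fintype n] [RCLike 𝕜]

theorem IsHermitian.posDef_sub_smul_one [DecidableEq n] {A : Matrix n n 𝕜} (hA : A.IsHermitian)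
    {c : ℝ} (hc : ∀ i, c < hA.eigenvalues i) : (A - c • 1).PosDef := by
  have hconj : A - c • 1 = conjStarAlgAut 𝕜 _ hA.eigenvectorUnitary
      (diagonal fun i ↦ ((hA.eigenvalues i - c : ℝ) : 𝕜)) := by
    conv_lhs => rw [RCLike.real_smul_eq_coe_smul (K := 𝕜), hA.spectral_theorem,
      ← map_one (conjStarAlgAut 𝕜 _ hA.eigenvectorUnitary), ← map_smul, ← map_sub]
    rw [smul_one_eq_diagonal, diagonal_sub]
    congr with i
    simp
  rw [hconj, conjStarAlgAut_apply, isUnit_coe.posDef_star_right_conjugate_iff,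
    posDef_diagonal_iff]
  exact fun i ↦ by simpa using hc i

theorem PosDef.trace_mul_pos {P Q : Matrix n n 𝕜} (hP : P.PosDef) (hQ : Q.PosSemidef)
    (hQ0 : Q ≠ 0) : 0 < (P * Q).trace := by
  obtain ⟨m, v, rfl⟩ := posSemidef_iff_eq_sum_vecMulVec.mp hQ
  have hterm : ∀ i, (P * vecMulVec (v i) (star (v i))).trace = star (v i) ⬝ᵥ (P *ᵥ v i) := by
    intro i
    rw [mul_vecMulVec, trace_vecMulVec, dotProduct_comm]
  obtain ⟨i, hi⟩ : ∃ i, v i ≠ 0 := by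
    by_contra! h
    simp [h] at hQ0
  rw [Matrix.mul_sum, trace_sum]
  simp_rw [hterm]
  exact sum_pos' (fun j _ ↦ hP.posSemidef.dotProduct_mulVec_nonneg _)
    ⟨i, mem_univ _, hP.dotProduct_mulVec_pos hi⟩

end RCLike

theorem IsSymm.posSemidef_one_sub_of_mem_rowStochastic {n R : Type*} [Fintype n] [DecidableEq n]
    [CommRing R] [LinearOrder R] [IsStrictOrderedRing R] [StarRing R] [TrivialStar R]
    {Z : Matrix n n R} (hsym : Z.IsSymm) (hZ : Z ∈ rowStochastic R n) : (1 - Z).PosSemidef := by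
  have hherm : Z.IsHermitian := by
    rw [IsHermitian, conjTranspose_eq_transpose_of_trivial, hsym.eq]
  refine .of_dotProduct_mulVec_nonneg (isHermitian_one.sub hherm) fun x ↦ ?_
  have hrows : ∑ i, ∑ j, Z i j * x i ^ 2 = x ⬝ᵥ x := by
    simp_rw [← sum_mul, sum_row_of_mem_rowStochastic hZ, one_mul, sq, dotProduct]
  have hcols : ∑ i, ∑ j, Z i j * x j ^ 2 = x ⬝ᵥ x := by
    rw [sum_comm, ← hrows]
    simp_rw [hsym.apply]
  have hsq : ∑ i, ∑ j, Z i j * (x i - x j) ^ 2 = 2 * (x ⬝ᵥ x - x ⬝ᵥ (Z *ᵥ x)) := by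
    have hcross : x ⬝ᵥ (Z *ᵥ x) = ∑ i, ∑ j, Z i j * (x i * x j) := by
      simp_rw [dotProduct, mulVec, dotProduct, mul_sum]
      exact sum_congr rfl fun i _ ↦ sum_congr rfl fun j _ ↦ by ring
    rw [two_mul, hcross]
    nth_rewrite 1 [← hrows]
    rw [← hcols]
    simp only [← sum_sub_distrib, ← sum_add_distrib]
    exact sum_congr rfl fun i _ ↦ sum_congr rfl fun j _ ↦ by ring
  have hnonneg : 0 ≤ ∑ i, ∑ j, Z i j * (x i - x j) ^ 2 :=
    sum_nonneg fun i _ ↦ sum_nonneg fun j _ ↦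
      mul_nonneg (nonneg_of_mem_rowStochastic hZ) (sq_nonneg _)
  rw [star_trivial, sub_mulVec, one_mulVec, dotProduct_sub]
  linarith

end Matrix

theorem sdpFeasible_one {n : ℕ} : sdpFeasible (1 : Matrix (Fin n) (Fin n) ℝ) :=
  ⟨isSymm_one, PosSemidef.one, fun i ↦ by simp [one_apply], fun i j ↦ zero_le_one_elem i j⟩

theorem sdpFeasible.mem_rowStochastic {n : ℕ} {Z : Matrix (Fin n) (Fin n) ℝ}
    (hZ : sdpFeasible Z) : Z ∈ rowStochastic ℝ (Fin n) :=
  mem_rowStochastic_iff_sum.2 ⟨hZ.2.2.2, hZ.2.2.1⟩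

theorem sdpObj_one_sub_sdpObj {n : ℕ} {A : Matrix (Fin n) (Fin n) ℝ} (hA : A.IsSymm)
    (Z : Matrix (Fin n) (Fin n) ℝ) (ρ : ℝ) :
    sdpObj A 1 ρ - sdpObj A Z ρ = ((A - ((n : ℝ) * ρ) • 1) * (1 - Z)).trace := by
  simp only [sdpObj, hA.eq, Matrix.sub_mul, Matrix.mul_sub, Matrix.smul_mul, Matrix.one_mul,
    Matrix.mul_one, trace_sub, trace_smul, trace_one, smul_eq_mul]

theorem sdp_unique_max_identity_general {n : ℕ}
    (A : Matrix (Fin n) (Fin n) ℝ) (hA : A.PosDef) (ρ : ℝ)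
    (hgap : ∀ i, (n : ℝ) * ρ < hA.1.eigenvalues i) :
    sdpFeasible (1 : Matrix (Fin n) (Fin n) ℝ) ∧
    ∀ Z : Matrix (Fin n) (Fin n) ℝ, sdpFeasible Z → Z ≠ 1 →
      sdpObj A Z ρ < sdpObj A (1 : Matrix (Fin n) (Fin n) ℝ) ρ := by
  refine ⟨sdpFeasible_one, fun Z hZ hZ1 ↦ ?_⟩
  have hP : (A - ((n : ℝ) * ρ) • 1).PosDef := hA.isHermitian.posDef_sub_smul_one hgap
  have hQ : (1 - Z).PosSemidef :=
    hZ.1.posSemidef_one_sub_of_mem_rowStochastic hZ.mem_rowStochastic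
  have hA_symm : A.IsSymm := (conjTranspose_eq_transpose_of_trivial A).symm.trans hA.isHermitian
  rw [← sub_pos, sdpObj_one_sub_sdpObj hA_symm]
  exact hP.trace_mul_pos hQ (sub_ne_zero.2 hZ1.symm)

/-- If A is symmetric positive definite and nρ < λ_min(A), then the identity matrix I_n is
the unique maximizer of ⟨A,Z⟩ − nρ·tr(Z) over 𝒞. -/
theorem sdp_unique_max_identity {n : ℕ} (hn : 0 < n)
    (A : Matrix (Fin n) (Fin n) ℝ) (hA : A.PosDef) (ρ : ℝ) (hρ : 0 < ρ)
    (hgap : ∀ i, (n : ℝ) * ρ < hA.1.eigenvalues i) :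
    sdpFeasible (1 : Matrix (Fin n) (Fin n) ℝ) ∧
    ∀ Z : Matrix (Fin n) (Fin n) ℝ, sdpFeasible Z → Z ≠ 1 →
      sdpObj A Z ρ < sdpObj A (1 : Matrix (Fin n) (Fin n) ℝ) ρ :=
  sdp_unique_max_identity_general A hA ρ hgap
end

section
/- Let Z* be the membership matrix of a partition G₁*,…,G_K* of {1,…,n} with cluster sizes n_k (Z*_{ij} = 1/n_k if i,j ∈ G_k*, else 0). For any symmetric matrix Z with nonnegative entries, row sums one, and Z ⪰ 0, one has ‖Z* − Z*Z‖₁ = 2·Σ_{k=1}^K Σ_{m≠k} ‖Z_{G_k* G_m*}‖₁, where ‖·‖₁ is the entrywise ℓ¹ norm and Z_{G_k* G_m*} denotes the submatrix with rows in G_k* and columns in G_m*. -/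
open Matrix BigOperators

/-- The membership matrix Z* of the partition given by the label map σ. -/
noncomputable def memberMatrix {n K : ℕ} (σ : Fin n → Fin K) : Matrix (Fin n) (Fin n) ℝ :=
  Matrix.of fun i j =>
    if σ i = σ j then (1 : ℝ) / ((Finset.univ.filter fun l => σ l = σ i).card : ℝ) else 0

/-- Entrywise ℓ¹ norm of a matrix. -/
def l1Norm {n : ℕ} (M : Matrix (Fin n) (Fin n) ℝ) : ℝ := ∑ i, ∑ j, |M i j|

/-- ℓ¹ norm of the (G_k*, G_m*) submatrix of Z. -/
def blockL1 {n K : ℕ} (σ : Fin n → Fin K) (Z : Matrix (Fin n) (Fin n) ℝ)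
    (k m : Fin K) : ℝ :=
  ∑ i ∈ Finset.univ.filter (fun i => σ i = k), ∑ j ∈ Finset.univ.filter (fun j => σ j = m), |Z i j|

/-! Column sums of `Z` are one by symmetry, so for `i ∈ G_k` the entry `(Z* − Z*Z)_{ij}` is
`1/n_k` times the mass column `j` of `Z` puts outside `G_k` when `j ∈ G_k`, and minus `1/n_k`
times the mass it puts inside `G_k` otherwise; both masses are nonnegative. Using symmetry once
more, row `i` then has ℓ¹ norm `2/n_k` times the cut `Σ_{l ∈ G_k, j ∉ G_k} Z_{lj}`, the `n_k`
rows of `G_k` contribute twice the cut, and the cut is `Σ_{m ≠ k} ‖Z_{G_k G_m}‖₁`. -/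

open Finset

theorem sum_inv_card_mul_eq {K ι : Type*} [DivisionSemiring K] [CharZero K] {s : Finset ι} {x : K}
    (hx : s = ∅ → x = 0) : ∑ _i ∈ s, (#s : K)⁻¹ * x = x := by
  rcases s.eq_empty_or_nonempty with hs | hs
  · simp [hx hs]
  · rw [sum_const, nsmul_eq_mul, ← mul_assoc, mul_inv_cancel₀ (by simp [hs.ne_empty]), one_mul]

theorem sum_col_eq_one_of_isSymm {ι : Type*} [Fintype ι] {Z : Matrix ι ι ℝ} (hsymm : Z.IsSymm)
    (hrow : ∀ i, ∑ j, Z i j = 1) (j : ι) : ∑ i, Z i j = 1 := by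
  simpa only [hsymm.apply] using hrow j

section Partition

variable {n K : ℕ} (σ : Fin n → Fin K)

theorem sum_erase_blockL1 (Z : Matrix (Fin n) (Fin n) ℝ) (k : Fin K) :
    ∑ m ∈ univ.erase k, blockL1 σ Z k m =
      ∑ i ∈ univ.filter (σ · = k), ∑ j ∈ univ.filter (σ · ≠ k), |Z i j| := by
  simp only [blockL1]
  rw [sum_comm]
  refine sum_congr rfl fun i _ => ?_
  rw [sum_fiberwise_eq_sum_filter]
  simp only [mem_erase, mem_univ, and_true]

theorem memberMatrix_mul_apply (Z : Matrix (Fin n) (Fin n) ℝ) (i j : Fin n) :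
    (memberMatrix σ * Z) i j =
      (#(univ.filter (σ · = σ i)) : ℝ)⁻¹ * ∑ l ∈ univ.filter (σ · = σ i), Z l j := by
  rw [mul_apply, sum_filter, mul_sum]
  refine sum_congr rfl fun l _ => ?_
  by_cases h : σ l = σ i
  · simp [memberMatrix, h]
  · simp [memberMatrix, h, Ne.symm h]

theorem memberMatrix_sub_mul_apply {Z : Matrix (Fin n) (Fin n) ℝ} (hcol : ∀ j, ∑ l, Z l j = 1)
    (i j : Fin n) :
    (memberMatrix σ - memberMatrix σ * Z) i j = (#(univ.filter (σ · = σ i)) : ℝ)⁻¹ *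
      if σ j = σ i then ∑ l ∈ univ.filter (σ · ≠ σ i), Z l j
      else -∑ l ∈ univ.filter (σ · = σ i), Z l j := by
  have hsplit : ∑ l ∈ univ.filter (σ · = σ i), Z l j + ∑ l ∈ univ.filter (σ · ≠ σ i), Z l j = 1 :=
    (sum_filter_add_sum_filter_not _ _ _).trans (hcol j)
  rw [Matrix.sub_apply, memberMatrix_mul_apply]
  by_cases h : σ j = σ i
  · simp only [memberMatrix, of_apply, one_div, h, if_true]
    linear_combination (-(#(univ.filter (σ · = σ i)) : ℝ)⁻¹) * hsplit
  · simp only [memberMatrix, of_apply, Ne.symm h, h, if_false]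
    ring

theorem sum_abs_memberMatrix_sub_mul_apply {Z : Matrix (Fin n) (Fin n) ℝ} (hsymm : Z.IsSymm)
    (hrow : ∀ i, ∑ j, Z i j = 1) (hpos : ∀ i j, 0 ≤ Z i j) (i : Fin n) :
    ∑ j, |(memberMatrix σ - memberMatrix σ * Z) i j| = (#(univ.filter (σ · = σ i)) : ℝ)⁻¹ *
      (2 * ∑ l ∈ univ.filter (σ · = σ i), ∑ j ∈ univ.filter (σ · ≠ σ i), Z l j) := by
  set G := univ.filter (σ · = σ i)
  set Gc := univ.filter (σ · ≠ σ i)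
  calc ∑ j, |(memberMatrix σ - memberMatrix σ * Z) i j|
      = ∑ j, (#G : ℝ)⁻¹ * if σ j = σ i then ∑ l ∈ Gc, Z l j else ∑ l ∈ G, Z l j := by
        refine sum_congr rfl fun j _ => ?_
        rw [memberMatrix_sub_mul_apply σ (sum_col_eq_one_of_isSymm hsymm hrow), abs_mul,
          abs_of_nonneg (inv_nonneg.2 (Nat.cast_nonneg _))]
        congr 1
        split_ifs
        · exact abs_of_nonneg (sum_nonneg fun l _ => hpos l j)
        · exact (abs_neg _).trans (abs_of_nonneg (sum_nonneg fun l _ => hpos l j))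
    _ = (#G : ℝ)⁻¹ * (∑ j ∈ G, ∑ l ∈ Gc, Z l j + ∑ j ∈ Gc, ∑ l ∈ G, Z l j) := by
        rw [← mul_sum, sum_ite]
    _ = (#G : ℝ)⁻¹ * (2 * ∑ l ∈ G, ∑ j ∈ Gc, Z l j) := by
        rw [sum_comm (s := Gc), two_mul]
        congr 2
        exact sum_congr rfl fun j _ => sum_congr rfl fun l _ => hsymm.apply j l

end Partition

theorem l1_memberMatrix_identity_general {n K : ℕ} (σ : Fin n → Fin K)
    (Z : Matrix (Fin n) (Fin n) ℝ) (hZ : sdpFeasible Z) :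
    l1Norm (memberMatrix σ - memberMatrix σ * Z) =
      2 * ∑ k : Fin K, ∑ m ∈ Finset.univ.erase k, blockL1 σ Z k m := by
  obtain ⟨hsymm, -, hrow, hpos⟩ := hZ
  calc l1Norm (memberMatrix σ - memberMatrix σ * Z)
      = ∑ k, ∑ i ∈ univ.filter (σ · = k), (#(univ.filter (σ · = k)) : ℝ)⁻¹ *
          (2 * ∑ l ∈ univ.filter (σ · = k), ∑ j ∈ univ.filter (σ · ≠ k), Z l j) := by
        rw [l1Norm, ← sum_fiberwise univ σ]
        refine sum_congr rfl fun k _ => sum_congr rfl fun i hi => ?_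
        rw [sum_abs_memberMatrix_sub_mul_apply σ hsymm hrow hpos, (mem_filter.1 hi).2]
    _ = ∑ k, 2 * ∑ l ∈ univ.filter (σ · = k), ∑ j ∈ univ.filter (σ · ≠ k), Z l j :=
        sum_congr rfl fun k _ => sum_inv_card_mul_eq fun h => by rw [h, sum_empty, mul_zero]
    _ = 2 * ∑ k, ∑ m ∈ univ.erase k, blockL1 σ Z k m := by
        simp only [mul_sum, sum_erase_blockL1, abs_of_nonneg (hpos _ _)]

/-- For the membership matrix Z* of a partition and any Z ∈ 𝒞,
‖Z* − Z*Z‖₁ = 2·Σ_k Σ_{m≠k} ‖Z_{G_k* G_m*}‖₁. -/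
theorem l1_memberMatrix_identity {n K : ℕ} (σ : Fin n → Fin K)
    (hσ : Function.Surjective σ)
    (Z : Matrix (Fin n) (Fin n) ℝ) (hZ : sdpFeasible Z) :
    l1Norm (memberMatrix σ - memberMatrix σ * Z) =
      2 * ∑ k : Fin K, ∑ m ∈ Finset.univ.erase k, blockL1 σ Z k m :=
  l1_memberMatrix_identity_general σ Z hZ
end

section
/- Let Z* be the membership matrix of a partition of {1,…,n} with cluster sizes n₁,…,n_K. For any Z in 𝒞 = {Z : Z = Zᵀ, Z ⪰ 0, Z·1 = 1, Z ≥ 0} (no trace constraint), one has ‖(I − Z*) Z (I − Z*)‖_* ≤ Σ_{k=1}^K Σ_{m≠k} (1/n_k)·‖Z_{G_k* G_m*}‖₁ + tr(Z) − tr(Z*). -/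
open Matrix BigOperators

/-- Nuclear norm of a matrix: the sum of its singular values
(square roots of the eigenvalues of MᴴM). -/
noncomputable def nuclearNorm {n : ℕ} (M : Matrix (Fin n) (Fin n) ℝ) : ℝ :=
  ∑ i, Real.sqrt ((Matrix.isHermitian_conjTranspose_mul_self M).eigenvalues i)

/-- Size n_k of the k-th cluster. -/
def clusterSize {n K : ℕ} (σ : Fin n → Fin K) (k : Fin K) : ℕ :=
  (Finset.univ.filter fun i => σ i = k).card

/-!
`Z*` is the orthogonal projection onto the vectors that are constant on each cluster, so
`(I - Z*) Z (I - Z*)` is positive semidefinite and its nuclear norm is its trace, which by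
idempotence is `tr Z - tr (Z* Z)`. Because the rows of `Z` sum to one,
`tr Z* - tr (Z* Z) = ∑ᵢ (1 / n_{σ i}) ∑_{σ j ≠ σ i} Z i j`, and grouping rows and columns by
cluster turns this into the off-diagonal block sum: the bound holds with equality.
-/

open scoped MatrixOrder

section

variable {ι : Type*} [Fintype ι] [DecidableEq ι]

lemma Matrix.PosSemidef.trace_cfcSqrt {A : Matrix ι ι ℝ} (hA : A.PosSemidef) :
    (CFC.sqrt A).trace = ∑ i, √(hA.1.eigenvalues i) := by
  rw [CFC.sqrt_eq_cfc, cfc_nnreal_eq_real _ A, hA.1.cfc_eq, IsHermitian.cfc,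
    Unitary.conjStarAlgAut_apply, trace_mul_cycle, Unitary.coe_star_mul_self, one_mul,
    trace_diagonal]
  simp [hA.eigenvalues_nonneg]

lemma Matrix.trace_one_sub_mul_mul_one_sub {R : Type*} [CommRing R] {P : Matrix ι ι R}
    (hP : IsIdempotentElem P) (Z : Matrix ι ι R) :
    ((1 - P) * Z * (1 - P)).trace = Z.trace - (P * Z).trace := by
  have hPZP : (P * Z * P).trace = (P * Z).trace := by
    rw [trace_mul_cycle, hP.eq, trace_mul_comm]
  simp only [sub_mul, mul_sub, one_mul, mul_one, trace_sub, hPZP, trace_mul_comm Z P]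
  ring

end

lemma nuclearNorm_eq_trace {n : ℕ} {M : Matrix (Fin n) (Fin n) ℝ} (hM : M.PosSemidef) :
    nuclearNorm M = M.trace := by
  have hsqrt : CFC.sqrt (Mᴴ * M) = M :=
    CFC.sqrt_unique (by rw [hM.1.eq]) hM.nonneg
  rw [nuclearNorm, ← (posSemidef_conjTranspose_mul_self M).trace_cfcSqrt, hsqrt]

section memberMatrix

variable {n K : ℕ} (σ : Fin n → Fin K)

lemma memberMatrix_apply (i j : Fin n) :
    memberMatrix σ i j = if σ i = σ j then 1 / (clusterSize σ (σ i) : ℝ) else 0 := rfl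

lemma memberMatrix_isHermitian : (memberMatrix σ).IsHermitian := by
  ext i j
  simp only [conjTranspose_apply, star_trivial, memberMatrix_apply]
  by_cases h : σ i = σ j <;> simp [h, eq_comm]

lemma memberMatrix_isIdempotentElem : IsIdempotentElem (memberMatrix σ) := by
  ext i j
  have hpos : (0 : ℝ) < clusterSize σ (σ i) :=
    Nat.cast_pos.2 (Finset.card_pos.2 ⟨i, by simp⟩)
  have hterm : ∀ x, memberMatrix σ i x * memberMatrix σ x j =
      if σ x = σ i then (1 / (clusterSize σ (σ i) : ℝ)) * memberMatrix σ i j else 0 := by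
    intro x
    simp only [memberMatrix_apply]
    by_cases hx : σ x = σ i <;> by_cases hij : σ i = σ j <;> simp_all [eq_comm]
  rw [mul_apply, Finset.sum_congr rfl fun x _ => hterm x, ← Finset.sum_filter, Finset.sum_const,
    nsmul_eq_mul]
  change (clusterSize σ (σ i) : ℝ) * _ = _
  field_simp

lemma trace_memberMatrix_sub_trace_mul {Z : Matrix (Fin n) (Fin n) ℝ}
    (hrow : ∀ i, ∑ j, Z i j = 1) :
    (memberMatrix σ).trace - (memberMatrix σ * Z).trace =
      ∑ i, 1 / (clusterSize σ (σ i) : ℝ) * ∑ j with σ j ≠ σ i, Z i j := by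
  rw [trace_mul_comm, trace, trace, ← Finset.sum_sub_distrib]
  refine Finset.sum_congr rfl fun i _ => ?_
  have hdiag : ∑ j, Z i j * memberMatrix σ j i =
      1 / (clusterSize σ (σ i) : ℝ) * ∑ j with σ j = σ i, Z i j := by
    rw [Finset.mul_sum, Finset.sum_filter]
    refine Finset.sum_congr rfl fun j _ => ?_
    by_cases h : σ j = σ i <;> simp [memberMatrix_apply, h, mul_comm]
  have hsplit := Finset.sum_filter_add_sum_filter_not Finset.univ (fun j => σ j = σ i) (Z i ·)
  rw [hrow i] at hsplit
  rw [diag_apply, diag_apply, mul_apply, hdiag, memberMatrix_apply, if_pos rfl]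
  linear_combination (-1 / (clusterSize σ (σ i) : ℝ)) * hsplit

lemma sum_blockL1_offDiag (Z : Matrix (Fin n) (Fin n) ℝ) :
    ∑ k, ∑ m ∈ Finset.univ.erase k, 1 / (clusterSize σ k : ℝ) * blockL1 σ Z k m =
      ∑ i, 1 / (clusterSize σ (σ i) : ℝ) * ∑ j with σ j ≠ σ i, |Z i j| := by
  rw [← Finset.sum_fiberwise Finset.univ σ
    fun i => 1 / (clusterSize σ (σ i) : ℝ) * ∑ j with σ j ≠ σ i, |Z i j|]
  refine Finset.sum_congr rfl fun k _ => ?_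
  simp_rw [blockL1, ← Finset.mul_sum]
  rw [Finset.sum_comm, Finset.mul_sum]
  refine Finset.sum_congr rfl fun i hi => ?_
  rw [(Finset.mem_filter.1 hi).2, Finset.sum_fiberwise_eq_sum_filter]
  simp only [Finset.mem_erase, Finset.mem_univ, and_true]

end memberMatrix

theorem nuclear_offdiag_bound_general {n K : ℕ} (σ : Fin n → Fin K)
    (Z : Matrix (Fin n) (Fin n) ℝ) (hZ : sdpFeasible Z) :
    nuclearNorm ((1 - memberMatrix σ) * Z * (1 - memberMatrix σ)) ≤
      (∑ k : Fin K, ∑ m ∈ Finset.univ.erase k, (1 / (clusterSize σ k : ℝ)) * blockL1 σ Z k m)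
        + Z.trace - (memberMatrix σ).trace := by
  obtain ⟨-, hpsd, hrow, hnonneg⟩ := hZ
  have hQ : (1 - memberMatrix σ)ᴴ = 1 - memberMatrix σ :=
    (isHermitian_one.sub (memberMatrix_isHermitian σ)).eq
  have hQZQ := hpsd.conjTranspose_mul_mul_same (1 - memberMatrix σ)
  rw [hQ] at hQZQ
  rw [nuclearNorm_eq_trace hQZQ, trace_one_sub_mul_mul_one_sub (memberMatrix_isIdempotentElem σ),
    sum_blockL1_offDiag]
  simp_rw [abs_of_nonneg (hnonneg _ _)]
  linarith [trace_memberMatrix_sub_trace_mul σ hrow]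

/-- For any Z ∈ 𝒞 (no trace constraint),
‖(I − Z*)Z(I − Z*)‖_* ≤ Σ_k Σ_{m≠k} (1/n_k)·‖Z_{G_k* G_m*}‖₁ + tr(Z) − tr(Z*). -/
theorem nuclear_offdiag_bound {n K : ℕ} (σ : Fin n → Fin K)
    (hσ : Function.Surjective σ)
    (Z : Matrix (Fin n) (Fin n) ℝ) (hZ : sdpFeasible Z) :
    nuclearNorm ((1 - memberMatrix σ) * Z * (1 - memberMatrix σ)) ≤
      (∑ k : Fin K, ∑ m ∈ Finset.univ.erase k, (1 / (clusterSize σ k : ℝ)) * blockL1 σ Z k m)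
        + Z.trace - (memberMatrix σ).trace :=
  nuclear_offdiag_bound_general σ Z hZ
end

section
/- Let G₁*,…,G_K* partition {1,…,n} and let A be an n×n real matrix with nonnegative entries. If max_{k≠m} ‖A_{G_k* G_m*}‖_∞ + max_k ‖A_{G_k* G_k*} − N_k^{-1}·1·1ᵀ‖_∞ < min_k (1/N_k) for positive numbers N₁,…,N_K, then there exists a threshold γ > 0 such that for every pair i,j: A_{ij} > γ if and only if i and j lie in the same cluster G_k*. In particular thresholding A at level γ exactly recovers the partition. -/
/-!
Within-cluster entries are at least `1 / N k - b`, between-cluster entries at most `a`, and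
the hypothesis `a + b < 1 / N k` says that every level `1 / N k - b` lies strictly above `a`.
Any threshold strictly between `a` and all these finitely many levels separates the two kinds
of entries; `0 ≤ a` makes it positive.
-/

theorem lt_iff_eq_of_separated {ι κ α : Type*} [LinearOrder α] (σ : ι → κ) (A : ι → ι → α)
    (L : κ → α) {a γ : α} (haγ : a ≤ γ) (hγL : ∀ k, γ < L k)
    (hbetween : ∀ i j, σ i ≠ σ j → A i j ≤ a) (hwithin : ∀ i j, σ i = σ j → L (σ i) ≤ A i j)
    (i j : ι) : γ < A i j ↔ σ i = σ j := by
  refine ⟨fun hγA => ?_, fun hij => (hγL (σ i)).trans_le (hwithin i j hij)⟩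
  by_contra hij
  exact (hγA.trans_le (hbetween i j hij)).not_ge haγ

theorem thresholding_exact_recovery_general {n K : ℕ} (σ : Fin n → Fin K)
    (A : Matrix (Fin n) (Fin n) ℝ)
    (N : Fin K → ℝ)
    (a b : ℝ) (ha0 : 0 ≤ a)
    (ha : ∀ i j, σ i ≠ σ j → |A i j| ≤ a)
    (hb : ∀ i j, σ i = σ j → |A i j - 1 / N (σ i)| ≤ b)
    (hcond : ∀ k, a + b < 1 / N k) :
    ∃ γ : ℝ, 0 < γ ∧ ∀ i j, (γ < A i j ↔ σ i = σ j) := by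
  obtain ⟨γ, haγ, hγL⟩ :=
    Order.exists_between_finsets {a} (Finset.univ.image fun k => 1 / N k - b) (by
      simp only [Finset.mem_singleton, Finset.mem_image, Finset.mem_univ, true_and]
      rintro _ rfl _ ⟨k, -, rfl⟩
      linarith [hcond k])
  have haγ : a < γ := haγ a (Finset.mem_singleton_self a)
  refine ⟨γ, ha0.trans_lt haγ, lt_iff_eq_of_separated σ A (fun k => 1 / N k - b) haγ.le
    (fun k => hγL _ (Finset.mem_image_of_mem _ (Finset.mem_univ k)))
    (fun i j hij => (le_abs_self _).trans (ha i j hij))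
    (fun i j hij => by linarith [(abs_le.mp (hb i j hij)).1])⟩

/-- Thresholding exact recovery: if A has nonnegative entries, all between-cluster entries
are at most a, all within-cluster entries of the k-th cluster differ from N_k⁻¹ by at most b
(a, b encoding the maxima max_{k≠m} ‖A_{G_k* G_m*}‖_∞ and
max_k ‖A_{G_k* G_k*} − N_k⁻¹·11ᵀ‖_∞), and a + b < min_k (1/N_k), then there exists a
threshold γ > 0 such that A_{ij} > γ iff i and j lie in the same cluster, so thresholding
A at level γ exactly recovers the partition encoded by the label map σ. -/
theorem thresholding_exact_recovery {n K : ℕ} (σ : Fin n → Fin K)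
    (hσ : Function.Surjective σ)
    (A : Matrix (Fin n) (Fin n) ℝ) (hApos : ∀ i j, 0 ≤ A i j)
    (N : Fin K → ℝ) (hN : ∀ k, 0 < N k)
    (a b : ℝ) (ha0 : 0 ≤ a) (hb0 : 0 ≤ b)
    (ha : ∀ i j, σ i ≠ σ j → |A i j| ≤ a)
    (hb : ∀ i j, σ i = σ j → |A i j - 1 / N (σ i)| ≤ b)
    (hcond : ∀ k, a + b < 1 / N k) :
    ∃ γ : ℝ, 0 < γ ∧ ∀ i j, (γ < A i j ↔ σ i = σ j) :=
  thresholding_exact_recovery_general σ A N a b ha0 ha hb hcond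
end

section
/- Let P_n be an n×n row-stochastic matrix indexed by states partitioned into G_k* and its complement, and let P_{n,k} be the transition matrix of the restricted chain on G_k*, i.e. [P_{n,k}]_{ij} = κ(X_i,X_j)/Σ_{ℓ∈G_k*} κ(X_i,X_ℓ) where [P_n]_{ij} = κ(X_i,X_j)/Σ_{ℓ=1}^n κ(X_i,X_ℓ) with κ ≥ 0. Suppose the one-step probability of leaving G_k* from any state in G_k* is at most ε ≤ 1. Then for all s ∈ ℕ and all i, j ∈ G_k*: (1 − ε)^s·[P_{n,k}^s]_{ij} ≤ [P_n^s]_{ij} ≤ [P_{n,k}^s]_{ij} + s·ε. In particular ‖[P_n^{2t}]_{G_k* G_k*} − P_{n,k}^{2t}‖_∞ ≤ 2tε. -/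
open Matrix BigOperators

/-- Transition matrix of the full random walk: P_{ij} = κ(X_i,X_j)/Σ_ℓ κ(X_i,X_ℓ). -/
noncomputable def fullP {n : ℕ} (κm : Fin n → Fin n → ℝ) : Matrix (Fin n) (Fin n) ℝ :=
  Matrix.of fun i j => κm i j / ∑ l, κm i l

/-- Transition matrix of the chain restricted to the cluster G:
[P_{n,k}]_{ij} = κ(X_i,X_j)/Σ_{ℓ∈G} κ(X_i,X_ℓ) for i, j ∈ G. -/
noncomputable def restrictedP {n : ℕ} (G : Finset (Fin n)) (κm : Fin n → Fin n → ℝ) :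
    Matrix G G ℝ :=
  Matrix.of fun i j => κm i.1 j.1 / ∑ l ∈ G, κm i.1 l

/-! The restricted chain is the full chain conditioned on its next state lying in `G`: for
`i, j ∈ G`, `P i j = m i * Q i j` with `m i = ∑_{l ∈ G} P i l ∈ [1 - ε, 1]`. Splitting
`P^(s+1) i j = ∑_l P i l * P^s l j` into `l ∈ G` and `l ∉ G`, induction on `s` gives the lower
bound by dropping the excursions out of `G` (losing a factor `1 - ε` per step) and the upper bound
by charging each step's excursions at most `ε`. Bernoulli's inequality `(1 - ε)^s ≥ 1 - s ε`
turns the two into the two-sided estimate. -/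

namespace Matrix

variable {R ι : Type*} [Fintype ι] [DecidableEq ι]

theorem mul_apply_eq_sum_subtype_add_sum_compl [NonUnitalNonAssocSemiring R]
    (A B : Matrix ι ι R) (G : Finset ι) (i j : ι) :
    (A * B) i j = ∑ l : G, A i l * B l j + ∑ l ∈ Gᶜ, A i l * B l j := by
  rw [mul_apply, ← Finset.sum_add_sum_compl G, Finset.sum_coe_sort G (fun l => A i l * B l j)]

variable [CommRing R] [LinearOrder R] [IsStrictOrderedRing R]
  {G : Finset ι} {P : Matrix ι ι R} {Q : Matrix G G R}

theorem pow_mul_pow_apply_le_pow_apply (hP : ∀ i j, 0 ≤ P i j) (hQ : ∀ i j, 0 ≤ Q i j)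
    {c : R} (hc : 0 ≤ c) (hQP : ∀ i j : G, c * Q i j ≤ P i j) (s : ℕ) (i j : G) :
    c ^ s * (Q ^ s) i j ≤ (P ^ s) i j := by
  induction s generalizing i with
  | zero =>
    rcases eq_or_ne i j with rfl | hij
    · simp
    · simp [hij, Subtype.val_injective.ne hij]
  | succ s ih =>
    have hout : 0 ≤ ∑ l ∈ Gᶜ, P i l * (P ^ s) l j :=
      Finset.sum_nonneg fun l _ => mul_nonneg (hP _ _) (pow_apply_nonneg hP _ _ _)
    calc c ^ (s + 1) * (Q ^ (s + 1)) i j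
        = ∑ l : G, (c * Q i l) * (c ^ s * (Q ^ s) l j) := by
          rw [pow_succ', pow_succ' Q, mul_apply, Finset.mul_sum]
          exact Finset.sum_congr rfl fun _ _ => by ring
      _ ≤ ∑ l : G, P i l * (P ^ s) l j :=
          Finset.sum_le_sum fun l _ => mul_le_mul (hQP i l) (ih l)
            (mul_nonneg (pow_nonneg hc s) (pow_apply_nonneg hQ _ _ _)) (hP _ _)
      _ ≤ (P ^ (s + 1)) i j := by
          rw [pow_succ', mul_apply_eq_sum_subtype_add_sum_compl _ _ G]
          exact le_add_of_nonneg_right hout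

theorem pow_apply_le_pow_apply_add (hP : P ∈ rowStochastic R ι) (hQ : Q ∈ rowStochastic R G)
    (hPQ : ∀ i j : G, P i j ≤ Q i j) {ε : R} (hleak : ∀ i ∈ G, ∑ l ∈ Gᶜ, P i l ≤ ε)
    (s : ℕ) (i j : G) :
    (P ^ s) i j ≤ (Q ^ s) i j + s * ε := by
  induction s generalizing i with
  | zero =>
    rcases eq_or_ne i j with rfl | hij
    · simp
    · simp [hij, Subtype.val_injective.ne hij]
  | succ s ih =>
    have hPs := pow_mem hP s
    have hout : ∑ l ∈ Gᶜ, P i l * (P ^ s) l j ≤ ε :=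
      (Finset.sum_le_sum fun l _ => mul_le_of_le_one_right (nonneg_of_mem_rowStochastic hP)
        (le_one_of_mem_rowStochastic hPs)).trans (hleak i i.2)
    have hin : ∑ l : G, P i l * (P ^ s) l j ≤ (Q ^ (s + 1)) i j + s * ε :=
      calc ∑ l : G, P i l * (P ^ s) l j
          ≤ ∑ l : G, Q i l * ((Q ^ s) l j + s * ε) :=
            Finset.sum_le_sum fun l _ => mul_le_mul (hPQ i l) (ih l)
              (nonneg_of_mem_rowStochastic hPs) (nonneg_of_mem_rowStochastic hQ)
        _ = (Q ^ (s + 1)) i j + s * ε := by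
            simp only [mul_add, Finset.sum_add_distrib, ← Finset.sum_mul,
              sum_row_of_mem_rowStochastic hQ, one_mul, pow_succ', mul_apply]
    rw [pow_succ', mul_apply_eq_sum_subtype_add_sum_compl _ _ G]
    push_cast
    linarith

end Matrix

theorem abs_sub_le_of_one_sub_pow_mul_le_of_le_add {R : Type*} [CommRing R] [LinearOrder R]
    [IsStrictOrderedRing R] {p q ε : R} {m : ℕ} (hq0 : 0 ≤ q) (hq1 : q ≤ 1) (hε0 : 0 ≤ ε)
    (hε2 : ε ≤ 2) (hlow : (1 - ε) ^ m * q ≤ p) (hup : p ≤ q + m * ε) :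
    |p - q| ≤ m * ε := by
  have hbernoulli : 1 - m * ε ≤ (1 - ε) ^ m := by
    simpa [sub_eq_add_neg] using one_add_mul_le_pow (a := -ε) (by linarith) m
  have hmε : 0 ≤ (m : R) * ε := mul_nonneg m.cast_nonneg hε0
  rw [abs_le]
  constructor <;> nlinarith [mul_le_mul_of_nonneg_right hbernoulli hq0]

section Kernel

variable {n : ℕ} {G : Finset (Fin n)} {κm : Fin n → Fin n → ℝ}

theorem fullP_mem_rowStochastic (hκ : ∀ i j, 0 ≤ κm i j) (hdfull : ∀ i, 0 < ∑ l, κm i l) :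
    fullP κm ∈ rowStochastic ℝ (Fin n) :=
  mem_rowStochastic_iff_sum.2
    ⟨fun i j => div_nonneg (hκ i j) (hdfull i).le, fun i => by
      simp only [fullP, of_apply, ← Finset.sum_div, div_self (hdfull i).ne']⟩

theorem restrictedP_mem_rowStochastic (hκ : ∀ i j, 0 ≤ κm i j)
    (hdG : ∀ i ∈ G, 0 < ∑ l ∈ G, κm i l) :
    restrictedP G κm ∈ rowStochastic ℝ G :=
  mem_rowStochastic_iff_sum.2
    ⟨fun i j => div_nonneg (hκ _ _) (hdG i i.2).le, fun i => by
      simp only [restrictedP, of_apply, ← Finset.sum_div,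
        Finset.sum_coe_sort G (fun l => κm i l), div_self (hdG i i.2).ne']⟩

theorem fullP_apply_eq_sum_mul_restrictedP_apply (i j : G) (hd : ∑ l ∈ G, κm i l ≠ 0) :
    fullP κm i j = (∑ l ∈ G, fullP κm i l) * restrictedP G κm i j := by
  simp only [fullP, restrictedP, of_apply, ← Finset.sum_div]
  field_simp

theorem fullP_le_restrictedP (hκ : ∀ i j, 0 ≤ κm i j) (hdfull : ∀ i, 0 < ∑ l, κm i l)
    (hdG : ∀ i ∈ G, 0 < ∑ l ∈ G, κm i l) (i j : G) :
    fullP κm i j ≤ restrictedP G κm i j := by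
  have hP := fullP_mem_rowStochastic hκ hdfull
  rw [fullP_apply_eq_sum_mul_restrictedP_apply i j (hdG i i.2).ne']
  refine mul_le_of_le_one_left
    (nonneg_of_mem_rowStochastic (restrictedP_mem_rowStochastic hκ hdG)) ?_
  rw [← sum_row_of_mem_rowStochastic hP i]
  exact Finset.sum_le_univ_sum_of_nonneg fun _ => nonneg_of_mem_rowStochastic hP

theorem one_sub_mul_restrictedP_le_fullP (hκ : ∀ i j, 0 ≤ κm i j)
    (hdfull : ∀ i, 0 < ∑ l, κm i l) (hdG : ∀ i ∈ G, 0 < ∑ l ∈ G, κm i l) {ε : ℝ}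
    (hleave : ∀ i ∈ G, ∑ j ∈ Gᶜ, (κm i j / ∑ l, κm i l) ≤ ε) (i j : G) :
    (1 - ε) * restrictedP G κm i j ≤ fullP κm i j := by
  have hleak : ∑ l ∈ Gᶜ, fullP κm i l ≤ ε := hleave i i.2
  have hstay : ∑ l ∈ G, fullP κm i l + ∑ l ∈ Gᶜ, fullP κm i l = 1 :=
    (Finset.sum_add_sum_compl G _).trans
      (sum_row_of_mem_rowStochastic (fullP_mem_rowStochastic hκ hdfull) i)
  rw [fullP_apply_eq_sum_mul_restrictedP_apply i j (hdG i i.2).ne']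
  refine mul_le_mul_of_nonneg_right ?_
    (nonneg_of_mem_rowStochastic (restrictedP_mem_rowStochastic hκ hdG))
  linarith

end Kernel

/-- Comparison between powers of the full chain and of the restricted chain: if the
one-step probability of leaving G from any state of G is at most ε ≤ 1, then for all s
and all i, j ∈ G: (1−ε)^s·[P_{n,k}^s]_{ij} ≤ [P_n^s]_{ij} ≤ [P_{n,k}^s]_{ij} + s·ε.
In particular ‖[P_n^{2t}]_{GG} − P_{n,k}^{2t}‖_∞ ≤ 2tε. -/
theorem restricted_chain_comparison {n : ℕ} (G : Finset (Fin n))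
    (κm : Fin n → Fin n → ℝ) (hκ : ∀ i j, 0 ≤ κm i j)
    (hdfull : ∀ i, 0 < ∑ l, κm i l)
    (hdG : ∀ i ∈ G, 0 < ∑ l ∈ G, κm i l)
    (ε : ℝ) (hε0 : 0 ≤ ε) (hε1 : ε ≤ 1)
    (hleave : ∀ i ∈ G, ∑ j ∈ Gᶜ, (κm i j / ∑ l, κm i l) ≤ ε) :
    (∀ s : ℕ, ∀ i j : G,
      (1 - ε) ^ s * ((restrictedP G κm) ^ s) i j ≤ ((fullP κm) ^ s) i.1 j.1 ∧
      ((fullP κm) ^ s) i.1 j.1 ≤ ((restrictedP G κm) ^ s) i j + (s : ℝ) * ε) ∧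
    (∀ t : ℕ, ∀ i j : G,
      |((fullP κm) ^ (2 * t)) i.1 j.1 - ((restrictedP G κm) ^ (2 * t)) i j|
        ≤ 2 * (t : ℝ) * ε) := by
  have hP := fullP_mem_rowStochastic hκ hdfull
  have hQ := restrictedP_mem_rowStochastic hκ hdG
  have hlow := pow_mul_pow_apply_le_pow_apply (P := fullP κm) (Q := restrictedP G κm)
    (fun _ _ => nonneg_of_mem_rowStochastic hP) (fun _ _ => nonneg_of_mem_rowStochastic hQ)
    (sub_nonneg.2 hε1)
    (one_sub_mul_restrictedP_le_fullP hκ hdfull hdG hleave)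
  have hup := pow_apply_le_pow_apply_add hP hQ (fullP_le_restrictedP hκ hdfull hdG) hleave
  refine ⟨fun s i j => ⟨hlow s i j, hup s i j⟩, fun t i j => ?_⟩
  have hQs := pow_mem hQ (2 * t)
  have h := abs_sub_le_of_one_sub_pow_mul_le_of_le_add (nonneg_of_mem_rowStochastic hQs)
    (le_one_of_mem_rowStochastic hQs) hε0 (by linarith) (hlow (2 * t) i j) (hup (2 * t) i j)
  simpa [mul_assoc] using h
end
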